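/- arXiv:1811.11464 — 4 statements merged into one kernel-verified Lean document; each statement's English description precedes it below -/
import Mathlib

section
/- Let A and B be finitely generated groups and G = A × B. Then G_bound ⊆ A_bound × B_bound, i.e. every element (a,b) of G_bound satisfies a ∈ A_bound and b ∈ B_bound. -/
/-- A finite symmetric generating set of a group. -/
def IsSymmGen {G : Type*} [Group G] (S : Finset G) : Prop :=
  (∀ s ∈ S, s⁻¹ ∈ S) ∧ Subgroup.closure (S : Set G) = ⊤

/-- The word length of `g` with respect to `S`: the least `n` such that
`g` is a product of `n` elements of `S`. -/
noncomputable def wordLen {G : Type*} [Group G] (S : Finset G) (g : G) : ℕ :=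
  sInf {n : ℕ | ∃ w : List G, (∀ s ∈ w, s ∈ S) ∧ w.length = n ∧ w.prod = g}

/-- Elements of uniformly bounded word length. -/
def GBound (G : Type*) [Group G] : Set G :=
  {g | ∃ M : ℕ, 0 < M ∧ ∀ S : Finset G, IsSymmGen S → wordLen S g ≤ M}

/-!
A homomorphism `φ : G →* H` does not increase word length from a generating set `S'` of `G` to
one of `H` containing `φ '' S'` up to the identity. For `A × B`, every symmetric generating set
`S` of `A` is of this form for the projection: pair `S ∪ {1}` with `T ∪ {1}` for a fixed
symmetric generating set `T` of `B`, which exists because `B` is finitely generated. So a bound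
on the word length of `(a, b)` over all generating sets of `A × B` bounds that of `a` over all
generating sets of `A`, and symmetrically for `b`.
-/

open scoped Pointwise

namespace IsSymmGen

variable {G H : Type*} [Group G] [Group H] {S : Finset G}

theorem exists_list_prod_eq (hS : IsSymmGen S) (g : G) :
    ∃ w : List G, (∀ s ∈ w, s ∈ S) ∧ w.prod = g := by
  have hS_inv : (S : Set G)⁻¹ ⊆ S := fun s hs => by simpa using hS.1 _ hs
  have hg : g ∈ (Subgroup.closure (S : Set G)).toSubmonoid := hS.2 ▸ Subgroup.mem_top g
  rw [Subgroup.closure_toSubmonoid, Set.union_eq_left.2 hS_inv] at hg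
  exact Submonoid.exists_list_of_mem_closure hg

theorem exists_list_length_eq_wordLen (hS : IsSymmGen S) (g : G) :
    ∃ w : List G, (∀ s ∈ w, s ∈ S) ∧ w.length = wordLen S g ∧ w.prod = g := by
  obtain ⟨w, hw, hprod⟩ := hS.exists_list_prod_eq g
  exact Nat.sInf_mem (s := {n | ∃ w : List G, (∀ s ∈ w, s ∈ S) ∧ w.length = n ∧ w.prod = g})
    ⟨w.length, w, hw, rfl, hprod⟩

theorem insert_one [DecidableEq G] (hS : IsSymmGen S) : IsSymmGen (insert 1 S) := by
  refine ⟨fun s hs => ?_, ?_⟩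
  · rcases Finset.mem_insert.1 hs with rfl | hs
    · simp
    · exact Finset.mem_insert_of_mem (hS.1 s hs)
  · rw [Finset.coe_insert, Subgroup.closure_insert_one, hS.2]

theorem product {T : Finset H} (hS : IsSymmGen S) (hT : IsSymmGen T) (hS_one : 1 ∈ S)
    (hT_one : 1 ∈ T) : IsSymmGen (S ×ˢ T) := by
  refine ⟨fun s hs => ?_, ?_⟩
  · rw [Finset.mem_product] at hs ⊢
    exact ⟨hS.1 _ hs.1, hT.1 _ hs.2⟩
  · rw [Finset.coe_product, Subgroup.closure_prod hS_one hT_one, hS.2, hT.2,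
      Subgroup.top_prod_top]

end IsSymmGen

theorem exists_isSymmGen (G : Type*) [Group G] [Group.FG G] : ∃ S : Finset G, IsSymmGen S := by
  classical
  obtain ⟨T, hT⟩ := Group.FG.out (G := G)
  refine ⟨T ∪ T⁻¹, fun s hs => ?_, ?_⟩
  · simp only [Finset.mem_union, Finset.mem_inv', inv_inv] at hs ⊢
    exact hs.symm
  · rw [eq_top_iff, ← hT]
    exact Subgroup.closure_mono (Finset.coe_subset.2 Finset.subset_union_left)

section WordLen

variable {G H : Type*} [Group G] [Group H]

theorem wordLen_prod_le_length {S : Finset G} {w : List G} (hw : ∀ s ∈ w, s = 1 ∨ s ∈ S) :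
    wordLen S w.prod ≤ w.length := by
  classical
  have hw' : ∀ s ∈ w.filter (· != 1), s ∈ S := fun s hs => by
    rw [List.mem_filter, bne_iff_ne] at hs
    exact (hw s hs.1).resolve_left hs.2
  calc wordLen S w.prod = wordLen S (w.filter (· != 1)).prod := by rw [List.prod_filter_bne_one]
    _ ≤ (w.filter (· != 1)).length := Nat.sInf_le ⟨_, hw', rfl, rfl⟩
    _ ≤ w.length := List.length_filter_le _ _

theorem wordLen_map_le (φ : G →* H) {S' : Finset G} (hS' : IsSymmGen S') {S : Finset H}
    (hφ : ∀ s ∈ S', φ s = 1 ∨ φ s ∈ S) (g : G) : wordLen S (φ g) ≤ wordLen S' g := by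
  obtain ⟨w, hw, hlen, rfl⟩ := hS'.exists_list_length_eq_wordLen g
  rw [← hlen, ← List.prod_hom, ← List.length_map (f := φ)]
  refine wordLen_prod_le_length fun s hs => ?_
  obtain ⟨t, ht, rfl⟩ := List.mem_map.1 hs
  exact hφ t (hw t ht)

theorem map_mem_gBound (φ : G →* H)
    (hφ : ∀ S : Finset H, IsSymmGen S → ∃ S' : Finset G, IsSymmGen S' ∧ ∀ s ∈ S', φ s = 1 ∨ φ s ∈ S)
    {g : G} (hg : g ∈ GBound G) : φ g ∈ GBound H := by
  obtain ⟨M, hM_pos, hM⟩ := hg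
  refine ⟨M, hM_pos, fun S hS => ?_⟩
  obtain ⟨S', hS', hφS'⟩ := hφ S hS
  exact (wordLen_map_le φ hS' hφS' g).trans (hM S' hS')

end WordLen

section Prod

variable {A B : Type*} [Group A] [Group B]

theorem Prod.fst_mem_gBound [Group.FG B] {p : A × B} (hp : p ∈ GBound (A × B)) :
    p.1 ∈ GBound A := by
  classical
  obtain ⟨T, hT⟩ := exists_isSymmGen B
  refine map_mem_gBound (MonoidHom.fst A B) (fun S hS => ?_) hp
  refine ⟨insert 1 S ×ˢ insert 1 T, hS.insert_one.product hT.insert_one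
    (Finset.mem_insert_self _ _) (Finset.mem_insert_self _ _), fun s hs => ?_⟩
  exact Finset.mem_insert.1 (Finset.mem_product.1 hs).1

theorem Prod.snd_mem_gBound [Group.FG A] {p : A × B} (hp : p ∈ GBound (A × B)) :
    p.2 ∈ GBound B := by
  classical
  obtain ⟨T, hT⟩ := exists_isSymmGen A
  refine map_mem_gBound (MonoidHom.snd A B) (fun S hS => ?_) hp
  refine ⟨insert 1 T ×ˢ insert 1 S, hT.insert_one.product hS.insert_one
    (Finset.mem_insert_self _ _) (Finset.mem_insert_self _ _), fun s hs => ?_⟩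
  exact Finset.mem_insert.1 (Finset.mem_product.1 hs).2

end Prod

/-- For `G = A × B`, `G_bound ⊆ A_bound × B_bound`. -/
theorem stmt2 (A B : Type*) [Group A] [Group B] [Group.FG A] [Group.FG B] :
    ∀ p ∈ GBound (A × B), p.1 ∈ GBound A ∧ p.2 ∈ GBound B :=
  fun _ hp => ⟨Prod.fst_mem_gBound hp, Prod.snd_mem_gBound hp⟩
end

section
/- Let G be an infinite finitely generated abelian group. Then G_bound is trivial: for every nonidentity element g of G and every constant M > 0 there exists a finite symmetric generating set S of G with l_S(g) > M. -/
open Finset Pointwise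

theorem IsSymmGen.exists_list_prod_eq_s8 {G : Type*} [Group G] {S : Finset G} (hS : IsSymmGen S)
    (g : G) : ∃ w : List G, (∀ s ∈ w, s ∈ S) ∧ w.prod = g := by
  have hinv : (S : Set G)⁻¹ ⊆ S := fun s hs => by simpa using hS.1 _ hs
  have hg : g ∈ Submonoid.closure (S : Set G) := by
    rw [← Set.union_eq_self_of_subset_right hinv, ← Subgroup.closure_toSubmonoid, hS.2]
    trivial
  simpa using Submonoid.exists_list_of_mem_closure hg

theorem IsSymmGen.lt_wordLen {G : Type*} [Group G] {S : Finset G} (hS : IsSymmGen S) {g : G}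
    {M : ℕ} (h : ∀ w : List G, (∀ s ∈ w, s ∈ S) → w.prod = g → M < w.length) :
    M < wordLen S g := by
  obtain ⟨w, hwS, hwg⟩ := hS.exists_list_prod_eq_s8 g
  obtain ⟨w, hwS, hlen, hwg⟩ := Nat.sInf_mem
    (s := {n | ∃ w : List G, (∀ s ∈ w, s ∈ S) ∧ w.length = n ∧ w.prod = g}) ⟨_, w, hwS, rfl, hwg⟩
  unfold wordLen
  exact hlen ▸ h w hwS hwg

theorem isSymmGen_union_inv {G : Type*} [Group G] [DecidableEq G] {s : Finset G}
    (hs : Subgroup.closure (s : Set G) = ⊤) : IsSymmGen (s ∪ s⁻¹) := by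
  refine ⟨fun a ha => ?_, ?_⟩
  · simp only [Finset.mem_union, Finset.mem_inv', inv_inv] at ha ⊢
    exact ha.symm
  · rw [Finset.coe_union, Finset.coe_inv, Subgroup.closure_union, Subgroup.closure_inv, hs]
    exact top_sup_eq _

theorem List.exists_prod_eq_prod_zpow {G ι : Type*} [CommGroup G] [Fintype ι] [DecidableEq ι]
    (σ : ι → G) (w : List G) (hw : ∀ s ∈ w, ∃ i, s = σ i ∨ s = (σ i)⁻¹) :
      ∃ c : ι → ℤ, ∑ i, |c i| ≤ w.length ∧ w.prod = ∏ i, σ i ^ c i := by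
  induction w with
  | nil => exact ⟨0, by simp⟩
  | cons s w ih =>
    obtain ⟨c, hc, hprod⟩ := ih fun t ht => hw t (List.mem_cons_of_mem s ht)
    obtain ⟨i, e, he, rfl⟩ : ∃ i, ∃ e : ℤ, |e| = 1 ∧ s = σ i ^ e := by
      obtain ⟨i, h | h⟩ := hw s List.mem_cons_self
      exacts [⟨i, 1, abs_one, by rw [h, zpow_one]⟩, ⟨i, -1, by simp, by rw [h, zpow_neg_one]⟩]
    set δ : ι → ℤ := Pi.single i e
    have hδ : ∀ j ≠ i, δ j = 0 := fun j hj => by simp [δ, hj]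
    have hδsum : ∑ j, |δ j| = 1 := by
      rw [Fintype.sum_eq_single (f := fun j => |δ j|) i (fun j hj => by simp [hδ j hj])]
      simpa [δ] using he
    have hδprod : ∏ j, σ j ^ δ j = σ i ^ e := by
      rw [Fintype.prod_eq_single (f := fun j => σ j ^ δ j) i (fun j hj => by simp [hδ j hj])]
      simp [δ]
    refine ⟨c + δ, ?_, ?_⟩
    · calc ∑ j, |(c + δ) j| ≤ ∑ j, (|c j| + |δ j|) :=
            Finset.sum_le_sum fun j _ => abs_add_le _ _
        _ = ∑ j, |c j| + 1 := by rw [Finset.sum_add_distrib, hδsum]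
        _ ≤ (σ i ^ e :: w).length := by rw [List.length_cons]; push_cast; linarith
    · simp only [List.prod_cons, hprod, Pi.add_apply, zpow_add, Finset.prod_mul_distrib, hδprod,
        mul_comm]

theorem eq_zero_of_sum_mul_pow_eq_zero {L : ℤ} :
    ∀ {n : ℕ} (D : Fin n → ℤ), ∑ i, |D i| < L → ∑ i, D i * L ^ (i : ℕ) = 0 → D = 0
  | 0, D, _, _ => Subsingleton.elim _ _
  | n + 1, D, hD, h => by
    rw [Fin.sum_univ_succ] at hD
    have hL : 0 < L := lt_of_le_of_lt (by positivity) hD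
    have hsplit : D 0 + L * ∑ i : Fin n, D i.succ * L ^ (i : ℕ) = 0 := by
      rw [← h, Fin.sum_univ_succ, Finset.mul_sum]
      simp only [Fin.val_zero, pow_zero, mul_one, Fin.val_succ, pow_succ]
      congr 1
      exact Finset.sum_congr rfl fun i _ => by ring
    have h0 : D 0 = 0 := by
      have : 0 ≤ ∑ i : Fin n, |D i.succ| := by positivity
      exact Int.eq_zero_of_abs_lt_dvd (m := L)
        ⟨-∑ i : Fin n, D i.succ * L ^ (i : ℕ), by linarith⟩ (by linarith)
    have htail : (fun i : Fin n => D i.succ) = 0 := by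
      refine eq_zero_of_sum_mul_pow_eq_zero (L := L) _ (by linarith [abs_nonneg (D 0)]) ?_
      rw [h0, zero_add] at hsplit
      exact (mul_eq_zero.mp hsplit).resolve_left hL.ne'
    funext i
    exact Fin.cases h0 (fun j => congrFun htail j) i

theorem eq_zero_of_prod_mul_zpow_pow_eq {G : Type*} [CommGroup G] (v : G →* Multiplicative ℤ)
    {x : G} (hx : v x = Multiplicative.ofAdd 1) {n : ℕ} (k : Fin n → G) {M : ℕ} {L : ℤ} {g : G}
    (hL : M * (∑ i, |(v (k i)).toAdd| + 1) + |(v g).toAdd| < L) {c : Fin n → ℤ}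
    (hc : ∑ i, |c i| ≤ M) (hg : ∏ i, (k i * x ^ L ^ ((i : ℕ) + 1)) ^ c i = g) : c = 0 := by
  set a : Fin n → ℤ := fun i => (v (k i)).toAdd
  set A := ∑ i, |a i|
  have hvg : (v g).toAdd = ∑ i, c i * a i + ∑ i, c i * L ^ ((i : ℕ) + 1) := by
    simp [← hg, hx, a, Finset.sum_add_distrib, mul_add]
  have hca : |∑ i, c i * a i| ≤ M * A := calc
    |∑ i, c i * a i| ≤ ∑ i, |c i| * |a i| := by
      simpa only [abs_mul] using Finset.abs_sum_le_sum_abs (fun i => c i * a i) univ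
    _ ≤ ∑ i, |c i| * A :=
      Finset.sum_le_sum fun i _ => mul_le_mul_of_nonneg_left
        (Finset.single_le_sum (f := fun i => |a i|) (fun j _ => abs_nonneg _) (mem_univ i))
        (abs_nonneg _)
    _ ≤ M * A := by
      rw [← Finset.sum_mul]
      exact mul_le_mul_of_nonneg_right hc (Finset.sum_nonneg fun i _ => abs_nonneg _)
  set D : Fin (n + 1) → ℤ := Fin.cons (∑ i, c i * a i - (v g).toAdd) c
  have hD : D = 0 := by
    refine eq_zero_of_sum_mul_pow_eq_zero (L := L) D ?_ ?_
    · rw [Fin.sum_univ_succ]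
      simp only [D, Fin.cons_zero, Fin.cons_succ]
      linarith [abs_sub (∑ i, c i * a i) (v g).toAdd]
    · rw [Fin.sum_univ_succ]
      simp only [D, Fin.cons_zero, Fin.cons_succ, Fin.val_zero, Fin.val_succ, pow_zero, mul_one,
        hvg]
      ring
  funext i
  simpa [D] using congrFun hD i.succ

theorem closure_range_mul_zpow_pow_eq_top {G : Type*} [Group G] {r : ℕ} {t : Fin r → G}
    (ht : Subgroup.closure (Set.range t) = ⊤) (x : G) (L : ℤ) :
    Subgroup.closure (Set.range fun i : Fin (r + 2) =>
      (Fin.cons 1 (Fin.cons x t : Fin (r + 1) → G) : Fin (r + 2) → G) i *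
        x ^ L ^ ((i : ℕ) + 1)) = ⊤ := by
  set σ : Fin (r + 2) → G := fun i =>
      (Fin.cons 1 (Fin.cons x t : Fin (r + 1) → G) : Fin (r + 2) → G) i * x ^ L ^ ((i : ℕ) + 1)
  have hσ (i : Fin (r + 2)) : σ i ∈ Subgroup.closure (Set.range σ) :=
    Subgroup.subset_closure (Set.mem_range_self i)
  have hx : x ∈ Subgroup.closure (Set.range σ) := by
    have h := mul_mem (hσ 1) (zpow_mem (hσ 0) (-L))
    convert h using 1
    simp only [σ, Fin.cons_zero, Fin.cons_one, Fin.val_zero, Fin.val_one, one_mul]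
    group
  rw [eq_top_iff, ← ht, Subgroup.closure_le]
  rintro _ ⟨j, rfl⟩
  have h := mul_mem (hσ j.succ.succ) (zpow_mem hx (-L ^ ((j : ℕ) + 3)))
  simpa [σ, Fin.cons_succ, ← zpow_add] using h

theorem exists_monoidHom_multiplicative_int_eq_ofAdd_one (G : Type*) [CommGroup G] [Group.FG G]
    [Infinite G] : ∃ (v : G →* Multiplicative ℤ) (x : G), v x = Multiplicative.ofAdd 1 := by
  obtain ⟨n, ι, _, p, hp, e, ⟨φ⟩⟩ := AddCommGroup.equiv_free_prod_directSum_zmod (Additive G)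
  obtain ⟨i⟩ : Nonempty (Fin n) := by
    by_contra hn
    have : IsEmpty (Fin n) := not_nonempty_iff.mp hn
    have : ∀ i, NeZero (p i ^ e i) := fun i => ⟨pow_ne_zero _ (hp i).ne_zero⟩
    have : Finite (Fin n →₀ ℤ) := Finite.of_subsingleton
    have : Finite (DirectSum ι fun i => ZMod (p i ^ e i)) :=
      Finite.of_equiv _ (DirectSum.addEquivProd _).symm.toEquiv
    have : Finite (Additive G) := Finite.of_equiv _ φ.toEquiv.symm
    exact not_finite (Additive G)
  refine ⟨AddMonoidHom.toMultiplicativeRight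
    ((Finsupp.applyAddHom i).comp ((AddMonoidHom.fst _ _).comp φ.toAddMonoidHom)),
    Additive.toMul (φ.symm (Finsupp.single i 1, 0)), ?_⟩
  simp

theorem Group.exists_fin_closure_range_eq_top (G : Type*) [Group G] [Group.FG G] :
    ∃ (r : ℕ) (t : Fin r → G), Subgroup.closure (Set.range t) = ⊤ := by
  obtain ⟨S, hS⟩ := Group.FG.out (G := G)
  refine ⟨S.card, fun i => S.equivFin.symm i, ?_⟩
  rwa [Set.range_comp' Subtype.val, S.equivFin.symm.range_eq_univ, Set.image_univ,
    Subtype.range_coe]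

theorem exists_isSymmGen_lt_wordLen {G : Type*} [CommGroup G] (v : G →* Multiplicative ℤ) {x : G}
    (hx : v x = Multiplicative.ofAdd 1) {r : ℕ} {t : Fin r → G}
    (ht : Subgroup.closure (Set.range t) = ⊤) {g : G} (hg : g ≠ 1) (M : ℕ) :
    ∃ S : Finset G, IsSymmGen S ∧ M < wordLen S g := by
  classical
  set k : Fin (r + 2) → G := Fin.cons 1 (Fin.cons x t : Fin (r + 1) → G)
  set L : ℤ := M * (∑ i, |(v (k i)).toAdd| + 1) + |(v g).toAdd| + 1
  set σ : Fin (r + 2) → G := fun i => k i * x ^ L ^ ((i : ℕ) + 1)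
  have hS : IsSymmGen (univ.image σ ∪ (univ.image σ)⁻¹) := by
    refine isSymmGen_union_inv ?_
    rw [coe_image, coe_univ, Set.image_univ]
    exact closure_range_mul_zpow_pow_eq_top ht x L
  refine ⟨_, hS, hS.lt_wordLen fun w hw hwg => ?_⟩
  by_contra! hlen
  obtain ⟨c, hc, hprod⟩ := List.exists_prod_eq_prod_zpow σ w fun s hs => by
    simpa [mem_inv', eq_comm, inv_eq_iff_eq_inv, exists_or] using hw s hs
  have hc0 : c = 0 := eq_zero_of_prod_mul_zpow_pow_eq v hx k (lt_add_one _)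
    (hc.trans (by exact_mod_cast hlen)) (hprod.symm.trans hwg)
  exact hg (by simp [← hwg, hprod, hc0])

/-- If `G` is an infinite finitely generated abelian group, then `G_bound` is
trivial. -/
theorem stmt8 (G : Type*) [CommGroup G] [Group.FG G] [Infinite G] :
    ∀ g : G, g ≠ 1 → ∀ M : ℕ, 0 < M →
      ∃ S : Finset G, IsSymmGen S ∧ M < wordLen S g := by
  intro g hg M _
  obtain ⟨v, x, hx⟩ := exists_monoidHom_multiplicative_int_eq_ofAdd_one G
  obtain ⟨r, t, ht⟩ := Group.exists_fin_closure_range_eq_top G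
  exact exists_isSymmGen_lt_wordLen v hx ht hg M
end

section
/- Let p be a prime, H a group in which every element h satisfies h^p = e, and A a finite group whose order is not divisible by p. Suppose G = H × A is finitely generated. Then for every element a ∈ A and every finite symmetric generating set S of G one has l_S((e,a)) ≤ p·|A|²; consequently {e} × A ⊆ G_bound. -/
section WordLength

variable {G K : Type*} [Group G] [Group K] {S : Finset G}

theorem wordLen_le_length {g : G} (w : List G) (hw : ∀ s ∈ w, s ∈ S) (hg : w.prod = g) :
    wordLen S g ≤ w.length :=
  Nat.sInf_le ⟨w, hw, rfl, hg⟩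

theorem IsSymmGen.exists_word (hS : IsSymmGen S) (g : G) :
    ∃ w : List G, (∀ s ∈ w, s ∈ S) ∧ w.prod = g := by
  have hg : g ∈ (Subgroup.closure (S : Set G)).toSubmonoid := hS.2 ▸ Subgroup.mem_top g
  rw [Subgroup.closure_toSubmonoid,
    Set.union_eq_left.2 fun s hs => by simpa using hS.1 _ hs] at hg
  exact Submonoid.exists_list_of_mem_closure hg

theorem IsSymmGen.exists_word_length_eq_wordLen (hS : IsSymmGen S) (g : G) :
    ∃ w : List G, (∀ s ∈ w, s ∈ S) ∧ w.length = wordLen S g ∧ w.prod = g := by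
  obtain ⟨w, hw, hg⟩ := hS.exists_word g
  exact Nat.sInf_mem (⟨w.length, w, hw, rfl, hg⟩ : Set.Nonempty {n | ∃ w : List G,
    (∀ s ∈ w, s ∈ S) ∧ w.length = n ∧ w.prod = g})

theorem wordLen_pow_le (hS : IsSymmGen S) (g : G) (n : ℕ) :
    wordLen S (g ^ n) ≤ n * wordLen S g := by
  obtain ⟨w, hw, hlen, hg⟩ := hS.exists_word_length_eq_wordLen g
  calc wordLen S (g ^ n) ≤ (List.replicate n w).flatten.length := by
        refine wordLen_le_length _ (fun s hs => ?_) (by simp [List.prod_flatten, hg])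
        obtain ⟨l, hl, hsl⟩ := List.mem_flatten.1 hs
        exact hw s (List.eq_of_mem_replicate hl ▸ hsl)
    _ = n * wordLen S g := by simp [hlen]

theorem wordLen_lt_card [Finite G] (hS : IsSymmGen S) (g : G) : wordLen S g < Nat.card G := by
  obtain ⟨w, hw, hlen, hg⟩ := hS.exists_word_length_eq_wordLen g
  -- The prefix products of a geodesic word are distinct: a repetition could be cut out.
  have hinj : Function.Injective fun i : Fin (w.length + 1) => (w.take i).prod := by
    refine .of_lt_imp_ne fun i j hij heq => ?_
    have hprod : (w.take i ++ w.drop j).prod = g := by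
      rw [List.prod_append, heq, List.prod_take_mul_prod_drop, hg]
    have hmem : ∀ s ∈ w.take i ++ w.drop j, s ∈ S := fun s hs =>
      (List.mem_append.1 hs).elim (hw s <| List.take_subset _ _ ·) (hw s <| List.drop_subset _ _ ·)
    have hshort := wordLen_le_length _ hmem hprod
    have hj : (j : ℕ) ≤ w.length := Nat.lt_succ_iff.1 j.2
    simp only [List.length_append, List.length_take, List.length_drop] at hshort
    omega
  simpa [hlen] using Nat.card_le_card_of_injective _ hinj

theorem IsSymmGen.image [DecidableEq K] (hS : IsSymmGen S) {f : G →* K}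
    (hf : Function.Surjective f) : IsSymmGen (S.image f) := by
  refine ⟨fun t ht => ?_, ?_⟩
  · obtain ⟨s, hs, rfl⟩ := Finset.mem_image.1 ht
    exact Finset.mem_image.2 ⟨s⁻¹, hS.1 s hs, map_inv f s⟩
  · rw [Finset.coe_image, ← MonoidHom.map_closure, hS.2, ← MonoidHom.range_eq_map]
    exact MonoidHom.range_eq_top_of_surjective f hf

theorem exists_map_eq_wordLen_le [DecidableEq K] (hS : IsSymmGen S) {f : G →* K}
    (hf : Function.Surjective f) (k : K) :
    ∃ g : G, f g = k ∧ wordLen S g ≤ wordLen (S.image f) k := by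
  obtain ⟨v, hv, hlen, hk⟩ := (hS.image hf).exists_word_length_eq_wordLen k
  obtain ⟨l, rfl⟩ : v ∈ Set.range (List.map fun s : S => f s) := by
    rw [Set.range_list_map]
    intro t ht
    obtain ⟨s, hs, rfl⟩ := Finset.mem_image.1 (hv t ht)
    exact ⟨⟨s, hs⟩, rfl⟩
  set u := l.map Subtype.val
  have hu : ∀ s ∈ u, s ∈ S := fun s hs => by
    obtain ⟨s', -, rfl⟩ := List.mem_map.1 hs
    exact s'.2
  refine ⟨u.prod, by simp [u, map_list_prod, ← hk], ?_⟩
  rw [← hlen, List.length_map]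
  simpa [u] using wordLen_le_length u hu rfl

end WordLength

theorem stmt13_general (p : ℕ) (hp : p.Prime) (H A : Type*) [Group H] [Group A]
    [Finite A] (hH : ∀ h : H, h ^ p = 1) (hA : ¬ p ∣ Nat.card A) :
    ∀ a : A,
      (∀ S : Finset (H × A), IsSymmGen S →
        wordLen S ((1, a) : H × A) ≤ p * (Nat.card A) ^ 2) ∧
      ((1, a) : H × A) ∈ GBound (H × A) := by
  have bound : ∀ a : A, ∀ S : Finset (H × A), IsSymmGen S →
      wordLen S ((1, a) : H × A) ≤ p * Nat.card A ^ 2 := by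
    intro a S hS
    classical
    have hsnd : Function.Surjective (MonoidHom.snd H A) := Prod.snd_surjective
    obtain ⟨c, hc⟩ := (powCoprime (hp.coprime_iff_not_dvd.2 hA).symm).surjective a
    obtain ⟨g, rfl, hg⟩ := exists_map_eq_wordLen_le hS hsnd c
    have hgp : g ^ p = (1, a) := Prod.ext (hH g.1) hc
    calc wordLen S ((1, a) : H × A) ≤ p * wordLen S g := hgp ▸ wordLen_pow_le hS g p
      _ ≤ p * Nat.card A :=
          Nat.mul_le_mul_left p (hg.trans (wordLen_lt_card (hS.image hsnd) _).le)
      _ ≤ p * Nat.card A ^ 2 := Nat.mul_le_mul_left p (Nat.le_self_pow two_ne_zero _)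
  exact fun a => ⟨bound a, p * Nat.card A ^ 2, mul_pos hp.pos (pow_pos Nat.card_pos 2), bound a⟩

/-- If every element of `H` satisfies `h^p = 1` for a prime `p` not dividing
`|A|`, and `G = H × A` is finitely generated, then every `(e, a)` has word
length at most `p·|A|²` for every finite symmetric generating set of `G`;
hence `{e} × A ⊆ G_bound`. -/
theorem stmt13 (p : ℕ) (hp : p.Prime) (H A : Type*) [Group H] [Group A]
    [Finite A] (hH : ∀ h : H, h ^ p = 1) (hA : ¬ p ∣ Nat.card A)
    [Group.FG (H × A)] :
    ∀ a : A,
      (∀ S : Finset (H × A), IsSymmGen S →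
        wordLen S ((1, a) : H × A) ≤ p * (Nat.card A) ^ 2) ∧
      ((1, a) : H × A) ∈ GBound (H × A) :=
  stmt13_general p hp H A hH hA
end

section
/- Let d ≥ 1, let g ∈ ℤ^d be a nonzero element, and let l ≥ 1 be an integer. Then there exists a finite symmetric generating set E of ℤ^d such that l_E(g) = l + 1. -/
/-!
Pick a coordinate `i` with `a := g i ≠ 0`, put `T := |a| (l + 1) + 1`, `v := T eᵢ`, and let `E`
consist of `±v`, `±(l v - g)` and the `±eⱼ` for `j ≠ i`. Then `g = l v - (l v - g)` is a word of
length `l + 1`. Conversely, the `i`-th coordinate of a word of length `n` over `E` is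
`p T + q (l T - a)` with `|p| + |q| ≤ n`; if it equals `a` then `a (1 + q) = T (p + q l)`, and as
`T > |a| (l + 1)` this forces `p + q l = 0`, hence `q = -1`, `p = l` and `n ≥ l + 1`.
Finally `E` generates `ℤ^d` because `T ≡ 1 mod a`.
-/

/-- A finite symmetric generating set of an additive group. -/
def IsSymmGenAdd {G : Type*} [AddGroup G] (S : Finset G) : Prop :=
  (∀ s ∈ S, -s ∈ S) ∧ AddSubgroup.closure (S : Set G) = ⊤

/-- The word length of `g` with respect to `S`: the least `n` such that
`g` is a sum of `n` elements of `S`. -/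
noncomputable def addWordLen {G : Type*} [AddGroup G] (S : Finset G) (g : G) : ℕ :=
  sInf {n : ℕ | ∃ w : List G, (∀ s ∈ w, s ∈ S) ∧ w.length = n ∧ w.sum = g}

/-- Elements of uniformly bounded word length. -/
def AddGBound (G : Type*) [AddGroup G] : Set G :=
  {g | ∃ M : ℕ, 0 < M ∧ ∀ S : Finset G, IsSymmGenAdd S → addWordLen S g ≤ M}

open Pointwise

lemma addWordLen_eq_of_forall_le {G : Type*} [AddGroup G] {S : Finset G} {g : G} (n : ℕ)
    (w : List G) (hwS : ∀ s ∈ w, s ∈ S) (hlen : w.length = n) (hsum : w.sum = g)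
    (hmin : ∀ w' : List G, (∀ s ∈ w', s ∈ S) → w'.sum = g → n ≤ w'.length) :
    addWordLen S g = n :=
  le_antisymm (Nat.sInf_le ⟨w, hwS, hlen, hsum⟩) <|
    le_csInf ⟨n, w, hwS, hlen, hsum⟩ fun _ ⟨w', hw', hlen', hsum'⟩ => hlen' ▸ hmin w' hw' hsum'

lemma isSymmGenAdd_union_neg {G : Type*} [AddGroup G] [DecidableEq G] (A : Finset G)
    (hA : AddSubgroup.closure (A : Set G) = ⊤) : IsSymmGenAdd (A ∪ -A) := by
  refine ⟨fun s hs => ?_, top_le_iff.mp (hA ▸ AddSubgroup.closure_mono ?_)⟩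
  · rw [Finset.mem_union, Finset.mem_neg'] at hs ⊢
    rwa [neg_neg, or_comm]
  · simp

lemma exists_sum_eq_zsmul_add_zsmul {M : Type*} [AddCommGroup M] (b c : M) (w : List M)
    (hw : ∀ x ∈ w, x = 0 ∨ x = b ∨ x = -b ∨ x = c ∨ x = -c) :
    ∃ p q : ℤ, w.sum = p • b + q • c ∧ |p| + |q| ≤ w.length := by
  induction w with
  | nil => exact ⟨0, 0, by simp, by simp⟩
  | cons x w ih =>
    obtain ⟨p, q, hsum, hpq⟩ := ih fun y hy => hw y (List.mem_cons_of_mem x hy)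
    have hp₁ := abs_add_le p 1
    have hp₂ := abs_sub p 1
    have hq₁ := abs_add_le q 1
    have hq₂ := abs_sub q 1
    simp only [List.sum_cons, List.length_cons, Nat.cast_succ, abs_one, hsum] at hp₁ hp₂ hq₁ hq₂ ⊢
    rcases hw x List.mem_cons_self with rfl | rfl | rfl | rfl | rfl
    · exact ⟨p, q, by simp, by linarith⟩
    · exact ⟨p + 1, q, by module, by linarith⟩
    · exact ⟨p - 1, q, by module, by linarith⟩
    · exact ⟨p, q + 1, by module, by linarith⟩
    · exact ⟨p, q - 1, by module, by linarith⟩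

lemma add_one_le_abs_add_abs_of_mul_add_mul_eq {a T p q : ℤ} {l : ℕ} (ha : a ≠ 0)
    (hT : |a| * (l + 1) < T) (h : p * T + q * (l * T - a) = a) : l + 1 ≤ |p| + |q| := by
  by_contra! hlt
  have hq : |q| ≤ l := by linarith [abs_nonneg p]
  have hfactor : a * (1 + q) = T * (p + q * l) := by linear_combination -h
  by_cases hzero : p + q * l = 0
  · have hq' : q = -1 := by
      rcases mul_eq_zero.mp (hfactor.trans (by rw [hzero, mul_zero])) with h | h
      · exact absurd h ha
      · omega
    subst hq'
    have hp : p = l := by omega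
    subst hp
    simp at hlt
  · have hT_le : T ≤ |a| * (1 + |q|) := calc
      T ≤ |T * (p + q * l)| := by
        rw [abs_mul, abs_of_pos (by nlinarith [abs_nonneg a] : 0 < T)]
        exact le_mul_of_one_le_right (by nlinarith [abs_nonneg a]) (Int.one_le_abs hzero)
      _ = |a| * |1 + q| := by rw [← hfactor, abs_mul]
      _ ≤ |a| * (1 + |q|) := by
        gcongr
        simpa using abs_add_le 1 q
    nlinarith [abs_nonneg a]

lemma addWordLen_eq_succ_of_addMonoidHom {G : Type*} [AddCommGroup G] [DecidableEq G]
    (φ : G →+ ℤ) (S : Finset G) (hS : ∀ s ∈ S, φ s = 0) (v g : G) (l : ℕ) (hg : φ g ≠ 0)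
    (hv : |φ g| * (l + 1) < φ v) :
    addWordLen (insert v (insert (l • v - g) S) ∪ -insert v (insert (l • v - g) S)) g
      = l + 1 := by
  set u := l • v - g
  refine addWordLen_eq_of_forall_le _ (List.replicate l v ++ [-u]) ?_ (by simp)
    (by simp [u]) fun w hw hsum => ?_
  · intro s hs
    simp only [List.mem_append, List.mem_replicate, List.mem_singleton] at hs
    rcases hs with ⟨-, rfl⟩ | rfl <;> simp
  · have hletters : ∀ x ∈ w.map φ, x = 0 ∨ x = φ v ∨ x = -φ v ∨ x = φ u ∨ x = -φ u := by
      simp only [List.mem_map]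
      rintro _ ⟨s, hs, rfl⟩
      have := hw s hs
      simp only [Finset.mem_union, Finset.mem_neg', Finset.mem_insert, neg_eq_iff_eq_neg] at this
      rcases this with (rfl | rfl | hs) | (rfl | rfl | hs)
      · exact Or.inr (Or.inl rfl)
      · exact Or.inr (Or.inr (Or.inr (Or.inl rfl)))
      · exact Or.inl (hS s hs)
      · exact Or.inr (Or.inr (Or.inl (map_neg φ v)))
      · exact Or.inr (Or.inr (Or.inr (Or.inr (map_neg φ u))))
      · exact Or.inl (by simpa using hS _ hs)
    obtain ⟨p, q, hpq, hlen⟩ := exists_sum_eq_zsmul_add_zsmul _ _ _ hletters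
    rw [← map_list_sum, hsum] at hpq
    rw [List.length_map] at hlen
    have hlower := add_one_le_abs_add_abs_of_mul_add_mul_eq hg hv (l := l) (p := p) (q := q)
      (by simpa [u] using hpq.symm)
    exact_mod_cast hlower.trans hlen

lemma AddSubgroup.eq_top_of_single_mem_of_isCoprime {ι : Type*} [Fintype ι] [DecidableEq ι]
    (H : AddSubgroup (ι → ℤ)) (i : ι) (hH : ∀ j ≠ i, Pi.single j 1 ∈ H) {x y : ι → ℤ}
    (hx : x ∈ H) (hy : y ∈ H) (hxy : IsCoprime (x i) (y i)) : H = ⊤ := by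
  have hsingle_of_ne : ∀ j ≠ i, ∀ c : ℤ, Pi.single j c ∈ H := fun j hj c => by
    simpa [← Pi.single_smul'] using H.zsmul_mem (hH j hj) c
  have hsingle_coord : ∀ z ∈ H, Pi.single i (z i) ∈ H := fun z hz => by
    have hsplit := Finset.add_sum_erase Finset.univ (fun j => Pi.single j (z j)) (Finset.mem_univ i)
    rw [Finset.univ_sum_single, ← eq_sub_iff_add_eq] at hsplit
    rw [hsplit]
    exact H.sub_mem hz <| H.sum_mem fun j hj => hsingle_of_ne j (Finset.ne_of_mem_erase hj) _
  obtain ⟨m, n, hmn⟩ := hxy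
  have hsingle_one : Pi.single i 1 ∈ H := by
    have := H.add_mem (H.zsmul_mem (hsingle_coord x hx) m) (H.zsmul_mem (hsingle_coord y hy) n)
    rwa [← Pi.single_smul', ← Pi.single_smul', ← Pi.single_add, smul_eq_mul, smul_eq_mul,
      hmn] at this
  have hsingle : ∀ j c, Pi.single j c ∈ H := fun j c => by
    by_cases hj : j = i
    · subst hj
      simpa [← Pi.single_smul'] using H.zsmul_mem hsingle_one c
    · exact hsingle_of_ne j hj c
  refine eq_top_iff.mpr fun z _ => ?_
  rw [← Finset.univ_sum_single z]
  exact H.sum_mem fun j _ => hsingle j (z j)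

theorem stmt15_general (d : ℕ) (g : Fin d → ℤ) (hg : g ≠ 0) (l : ℕ) :
    ∃ E : Finset (Fin d → ℤ), IsSymmGenAdd E ∧ addWordLen E g = l + 1 := by
  obtain ⟨i, hi⟩ : ∃ i, g i ≠ 0 := Function.ne_iff.mp hg
  set T : ℤ := |g i| * (l + 1) + 1
  set v : Fin d → ℤ := Pi.single i T
  set A : Finset (Fin d → ℤ) :=
    insert v (insert (l • v - g) ((Finset.univ.erase i).image fun j => Pi.single j 1))
  have hcoprime : IsCoprime (v i) ((l • v - g) i) := by
    have hT : IsCoprime T (g i) := ⟨1, -(l + 1) * Int.sign (g i), by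
      linear_combination -(l + 1) * Int.sign_mul_self_eq_abs (g i)⟩
    simpa [v, sub_eq_add_neg, mul_comm] using (hT.neg_right.add_mul_left_right l)
  refine ⟨A ∪ -A, isSymmGenAdd_union_neg A ?_, ?_⟩
  · refine AddSubgroup.eq_top_of_single_mem_of_isCoprime _ i (fun j hj => ?_)
      (AddSubgroup.subset_closure (by simp [A])) (AddSubgroup.subset_closure (by simp [A])) hcoprime
    exact AddSubgroup.subset_closure <| Finset.mem_insert_of_mem <| Finset.mem_insert_of_mem <|
      Finset.mem_image_of_mem _ (Finset.mem_erase.mpr ⟨hj, Finset.mem_univ j⟩)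
  · refine addWordLen_eq_succ_of_addMonoidHom (Pi.evalAddMonoidHom _ i) _ ?_ v g l hi ?_
    · simp +contextual [eq_comm]
    · simp [v, T]

/-- Every nonzero element of `ℤ^d` can be given prescribed word length `l + 1`
by a suitable finite symmetric generating set. -/
theorem stmt15 (d : ℕ) (hd : 1 ≤ d) (g : Fin d → ℤ) (hg : g ≠ 0) (l : ℕ)
    (hl : 1 ≤ l) :
    ∃ E : Finset (Fin d → ℤ), IsSymmGenAdd E ∧ addWordLen E g = l + 1 :=
  stmt15_general d g hg l
end
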